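/- Given a function μ_k: k+k → k sending both copies of i ∈ {0,...,k-1} to i, and the inclusion z₁: i+j → i+k+j, the cospan (i+j) --z₁--> (i+k+j) <--(id_i + μ_k + id_j)-- (i+k+k+j) composed (by pushout in finite sets) with the coproduct of discrete cospans (i+k) → C̃₁ ← n and (k+j) → C̃₂ ← m yields a cospan i+j → C ← n+m whose carrier C is the pushout identifying the two copies of k in C̃₁ + C̃₂. -/
import Mathlib


/- STATEMENT 17: Composing the cospan
(i+j) --z₁--> (i+k+j) <--(id_i + μ_k + id_j)-- (i+k+k+j)
(where μ_k is the codiagonal and z₁ the inclusion) with the coproduct of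
cospans (i+k) → C̃₁ ← n and (k+j) → C̃₂ ← m (composition by pushout) yields a
cospan (i+j) → C ← (n+m) whose carrier C is the pushout identifying the two
copies of k in C̃₁ + C̃₂. -/

/-- A cospan with interface types `X`, `Y` and carrier `A`. -/
structure GCospan (X Y : Type) where
  A : Type
  l : X → A
  r : Y → A

/-- The relation generating the pushout identifying `c.r y` with `d.l y`. -/
def glueRel {X Y Z : Type} (c : GCospan X Y) (d : GCospan Y Z) :
    (c.A ⊕ d.A) → (c.A ⊕ d.A) → Prop :=
  fun a b => ∃ y : Y, a = Sum.inl (c.r y) ∧ b = Sum.inr (d.l y)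

/-- Composition of cospans by pushout. -/
def GCospan.comp {X Y Z : Type} (c : GCospan X Y) (d : GCospan Y Z) : GCospan X Z where
  A := Quot (glueRel c d)
  l := fun x => Quot.mk _ (Sum.inl (c.l x))
  r := fun z => Quot.mk _ (Sum.inr (d.r z))

/-- Coproduct of cospans. -/
def GCospan.tensor {X Y X' Y' : Type} (c : GCospan X Y) (c' : GCospan X' Y') :
    GCospan (X ⊕ X') (Y ⊕ Y') where
  A := c.A ⊕ c'.A
  l := Sum.map c.l c'.l
  r := Sum.map c.r c'.r

/-- The cospan (i+j) --z₁--> (i+k+j) <--(id_i + μ_k + id_j)-- ((i+k)+(k+j)),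
with z₁ the inclusion and μ_k the codiagonal sending both copies of k to k. -/
def midCospan (i k j : ℕ) :
    GCospan (Fin i ⊕ Fin j) ((Fin i ⊕ Fin k) ⊕ (Fin k ⊕ Fin j)) where
  A := Fin i ⊕ Fin k ⊕ Fin j
  l := fun x =>
    match x with
    | .inl a => .inl a
    | .inr b => .inr (.inr b)
  r := fun y =>
    match y with
    | .inl (.inl a) => .inl a
    | .inl (.inr x) => .inr (.inl x)
    | .inr (.inl x) => .inr (.inl x)
    | .inr (.inr b) => .inr (.inr b)

/-- The relation identifying the two copies of `k` inside `C̃₁ + C̃₂`. -/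
def kGlueRel {i k j n m : ℕ}
    (c₁ : GCospan (Fin i ⊕ Fin k) (Fin n)) (c₂ : GCospan (Fin k ⊕ Fin j) (Fin m)) :
    (c₁.A ⊕ c₂.A) → (c₁.A ⊕ c₂.A) → Prop :=
  fun a b => ∃ x : Fin k, a = Sum.inl (c₁.l (Sum.inr x)) ∧ b = Sum.inr (c₂.l (Sum.inl x))


section Aux
variable {i k j n m : ℕ}
  (c₁ : GCospan (Fin i ⊕ Fin k) (Fin n)) (c₂ : GCospan (Fin k ⊕ Fin j) (Fin m))

/-- Forward map on representatives. -/
def fwdAux : ((Fin i ⊕ Fin k ⊕ Fin j) ⊕ (c₁.A ⊕ c₂.A)) → Quot (kGlueRel c₁ c₂)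
  | .inl (.inl a) => Quot.mk _ (Sum.inl (c₁.l (Sum.inl a)))
  | .inl (.inr (.inl x)) => Quot.mk _ (Sum.inl (c₁.l (Sum.inr x)))
  | .inl (.inr (.inr b)) => Quot.mk _ (Sum.inr (c₂.l (Sum.inr b)))
  | .inr s => Quot.mk _ s

def fwd : ((midCospan i k j).comp (c₁.tensor c₂)).A → Quot (kGlueRel c₁ c₂) :=
  Quot.lift (fwdAux c₁ c₂) (by
    rintro a b ⟨y, rfl, rfl⟩
    rcases y with (a | x) | (x | b)
    · rfl
    · rfl
    · exact Quot.sound ⟨x, rfl, rfl⟩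
    · rfl)

def bwd : Quot (kGlueRel c₁ c₂) → ((midCospan i k j).comp (c₁.tensor c₂)).A :=
  Quot.lift (fun s => Quot.mk _ (Sum.inr s)) (by
    rintro a b ⟨x, rfl, rfl⟩
    have h1 : (Quot.mk (glueRel (midCospan i k j) (c₁.tensor c₂))
        (Sum.inl (Sum.inr (Sum.inl x)))) = Quot.mk _ (Sum.inr (Sum.inl (c₁.l (Sum.inr x)))) :=
      Quot.sound ⟨Sum.inl (Sum.inr x), rfl, rfl⟩
    have h2 : (Quot.mk (glueRel (midCospan i k j) (c₁.tensor c₂))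
        (Sum.inl (Sum.inr (Sum.inl x)))) = Quot.mk _ (Sum.inr (Sum.inr (c₂.l (Sum.inl x)))) :=
      Quot.sound ⟨Sum.inr (Sum.inl x), rfl, rfl⟩
    exact h1.symm.trans h2)

theorem left_inv : Function.LeftInverse (bwd c₁ c₂) (fwd c₁ c₂) := by
  apply Quot.ind
  rintro ((a | (x | b)) | s)
  · exact (Quot.sound ⟨Sum.inl (Sum.inl a), rfl, rfl⟩).symm
  · exact (Quot.sound ⟨Sum.inl (Sum.inr x), rfl, rfl⟩).symm
  · exact (Quot.sound ⟨Sum.inr (Sum.inr b), rfl, rfl⟩).symm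
  · rfl

theorem right_inv : Function.RightInverse (bwd c₁ c₂) (fwd c₁ c₂) := by
  apply Quot.ind
  intro s; rfl

end Aux

/-- The composite cospan has carrier the pushout identifying the two copies of
k in C̃₁ + C̃₂, compatibly with the legs. -/
theorem boundary_complement_carrier (i k j n m : ℕ)
    (c₁ : GCospan (Fin i ⊕ Fin k) (Fin n)) (c₂ : GCospan (Fin k ⊕ Fin j) (Fin m)) :
    ∃ e : ((midCospan i k j).comp (c₁.tensor c₂)).A ≃ Quot (kGlueRel c₁ c₂),
      (∀ a : Fin i, e (((midCospan i k j).comp (c₁.tensor c₂)).l (Sum.inl a))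
          = Quot.mk _ (Sum.inl (c₁.l (Sum.inl a)))) ∧
      (∀ b : Fin j, e (((midCospan i k j).comp (c₁.tensor c₂)).l (Sum.inr b))
          = Quot.mk _ (Sum.inr (c₂.l (Sum.inr b)))) ∧
      (∀ y : Fin n ⊕ Fin m, e (((midCospan i k j).comp (c₁.tensor c₂)).r y)
          = Quot.mk _ (Sum.map c₁.r c₂.r y)) := by
  refine ⟨⟨fwd c₁ c₂, bwd c₁ c₂, left_inv c₁ c₂, right_inv c₁ c₂⟩, ?_, ?_, ?_⟩
  · intro a; rfl
  · intro b; rfl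
  · rintro (y | y) <;> rfl
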